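/- arXiv:2504.01361 — 3 statements merged into one kernel-verified Lean document; each statement's English description precedes it below -/
import Mathlib

section
/- Let u : ℝ³ → ℝ be smooth in the variables (x,y,t) and let f : ℝ⁴ → ℝ be smooth in the variables (x,y,t,λ). Then the commutator of the Lax operators satisfies the identity (L₁(L₂ f) − L₂(L₁ f))(x,y,t,λ) = −λ · ( ∂_x∂_y(u²) + ∂_y∂_y u + 2 ∂_x∂_t u )(x,y,t) · ∂_λ f(x,y,t,λ) for all (x,y,t,λ) ∈ ℝ⁴, where ∂_x∂_y(u²) = 2(∂_x u · ∂_y u + u · ∂_x∂_y u). -/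
/-! Auxiliary machinery: directional derivatives. -/

noncomputable def pd {E : Type*} [NormedAddCommGroup E] [NormedSpace ℝ E]
    (v : E) (G : E → ℝ) : E → ℝ := fun p => fderiv ℝ G p v

lemma pd_contDiff {E : Type*} [NormedAddCommGroup E] [NormedSpace ℝ E]
    {G : E → ℝ} (hG : ContDiff ℝ (⊤ : ℕ∞) G) (v : E) : ContDiff ℝ (⊤ : ℕ∞) (pd v G) :=
  (hG.fderiv_right (by simp)).clm_apply contDiff_const

lemma pd_comm {E : Type*} [NormedAddCommGroup E] [NormedSpace ℝ E]
    {G : E → ℝ} (hG : ContDiff ℝ (⊤ : ℕ∞) G) (v w : E) (p : E) :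
    pd v (pd w G) p = pd w (pd v G) p := by
  have hd : ∀ q, HasFDerivAt G (fderiv ℝ G q) q := fun q =>
    (hG.differentiable (by simp) q).hasFDerivAt
  have hdiff : DifferentiableAt ℝ (fderiv ℝ G) p :=
    (hG.fderiv_right (m := (⊤ : ℕ∞)) (by simp)).differentiable (by simp) p
  have hd2 : HasFDerivAt (fderiv ℝ G) (fderiv ℝ (fderiv ℝ G) p) p := hdiff.hasFDerivAt
  have hsymm := second_derivative_symmetric hd hd2 w v
  have key : ∀ a b : E, pd a (pd b G) p = fderiv ℝ (fderiv ℝ G) p a b := by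
    intro a b
    show fderiv ℝ (fun q => (fderiv ℝ G q) b) p a = _
    rw [fderiv_clm_apply hdiff (differentiableAt_const b)]
    simp
  rw [key, key, hsymm]

def e1 : ℝ × ℝ × ℝ × ℝ := (1,0,0,0)
def e2 : ℝ × ℝ × ℝ × ℝ := (0,1,0,0)
def e3 : ℝ × ℝ × ℝ × ℝ := (0,0,1,0)
def e4 : ℝ × ℝ × ℝ × ℝ := (0,0,0,1)
def d1 : ℝ × ℝ × ℝ := (1,0,0)
def d2 : ℝ × ℝ × ℝ := (0,1,0)
def d3 : ℝ × ℝ × ℝ := (0,0,1)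

lemma hd4x (G : ℝ × ℝ × ℝ × ℝ → ℝ) (hG : ContDiff ℝ (⊤ : ℕ∞) G) (x y t l : ℝ) :
    HasDerivAt (fun x' => G (x', y, t, l)) (pd e1 G (x, y, t, l)) x := by
  have h : HasDerivAt (fun x' : ℝ => ((x', y, t, l) : ℝ × ℝ × ℝ × ℝ)) e1 x :=
    (hasDerivAt_id x).prodMk (hasDerivAt_const x (y, t, l))
  exact ((hG.differentiable (by simp) _).hasFDerivAt.comp_hasDerivAt x h :)

lemma hd4y (G : ℝ × ℝ × ℝ × ℝ → ℝ) (hG : ContDiff ℝ (⊤ : ℕ∞) G) (x y t l : ℝ) :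
    HasDerivAt (fun y' => G (x, y', t, l)) (pd e2 G (x, y, t, l)) y := by
  have h : HasDerivAt (fun y' : ℝ => ((x, y', t, l) : ℝ × ℝ × ℝ × ℝ)) e2 y :=
    (hasDerivAt_const y x).prodMk ((hasDerivAt_id y).prodMk (hasDerivAt_const y (t, l)))
  exact ((hG.differentiable (by simp) _).hasFDerivAt.comp_hasDerivAt y h :)

lemma hd4t (G : ℝ × ℝ × ℝ × ℝ → ℝ) (hG : ContDiff ℝ (⊤ : ℕ∞) G) (x y t l : ℝ) :
    HasDerivAt (fun t' => G (x, y, t', l)) (pd e3 G (x, y, t, l)) t := by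
  have h : HasDerivAt (fun t' : ℝ => ((x, y, t', l) : ℝ × ℝ × ℝ × ℝ)) e3 t :=
    (hasDerivAt_const t x).prodMk ((hasDerivAt_const t y).prodMk
      ((hasDerivAt_id t).prodMk (hasDerivAt_const t l)))
  exact ((hG.differentiable (by simp) _).hasFDerivAt.comp_hasDerivAt t h :)

lemma hd4l (G : ℝ × ℝ × ℝ × ℝ → ℝ) (hG : ContDiff ℝ (⊤ : ℕ∞) G) (x y t l : ℝ) :
    HasDerivAt (fun l' => G (x, y, t, l')) (pd e4 G (x, y, t, l)) l := by
  have h : HasDerivAt (fun l' : ℝ => ((x, y, t, l') : ℝ × ℝ × ℝ × ℝ)) e4 l :=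
    (hasDerivAt_const l x).prodMk ((hasDerivAt_const l y).prodMk
      ((hasDerivAt_const l t).prodMk (hasDerivAt_id l)))
  exact ((hG.differentiable (by simp) _).hasFDerivAt.comp_hasDerivAt l h :)

lemma hd3x (G : ℝ × ℝ × ℝ → ℝ) (hG : ContDiff ℝ (⊤ : ℕ∞) G) (x y t : ℝ) :
    HasDerivAt (fun x' => G (x', y, t)) (pd d1 G (x, y, t)) x := by
  have h : HasDerivAt (fun x' : ℝ => ((x', y, t) : ℝ × ℝ × ℝ)) d1 x :=
    (hasDerivAt_id x).prodMk (hasDerivAt_const x (y, t))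
  exact ((hG.differentiable (by simp) _).hasFDerivAt.comp_hasDerivAt x h :)

lemma hd3y (G : ℝ × ℝ × ℝ → ℝ) (hG : ContDiff ℝ (⊤ : ℕ∞) G) (x y t : ℝ) :
    HasDerivAt (fun y' => G (x, y', t)) (pd d2 G (x, y, t)) y := by
  have h : HasDerivAt (fun y' : ℝ => ((x, y', t) : ℝ × ℝ × ℝ)) d2 y :=
    (hasDerivAt_const y x).prodMk ((hasDerivAt_id y).prodMk (hasDerivAt_const y t))
  exact ((hG.differentiable (by simp) _).hasFDerivAt.comp_hasDerivAt y h :)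

lemma hd3t (G : ℝ × ℝ × ℝ → ℝ) (hG : ContDiff ℝ (⊤ : ℕ∞) G) (x y t : ℝ) :
    HasDerivAt (fun t' => G (x, y, t')) (pd d3 G (x, y, t)) t := by
  have h : HasDerivAt (fun t' : ℝ => ((x, y, t') : ℝ × ℝ × ℝ)) d3 t :=
    (hasDerivAt_const t x).prodMk ((hasDerivAt_const t y).prodMk (hasDerivAt_id t))
  exact ((hG.differentiable (by simp) _).hasFDerivAt.comp_hasDerivAt t h :)

/-! Specializations to `f` and `u`. -/

def F4 (f : ℝ → ℝ → ℝ → ℝ → ℝ) : ℝ × ℝ × ℝ × ℝ → ℝ :=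
  fun p => f p.1 p.2.1 p.2.2.1 p.2.2.2

def U3 (u : ℝ → ℝ → ℝ → ℝ) : ℝ × ℝ × ℝ → ℝ := fun p => u p.1 p.2.1 p.2.2

noncomputable def DF (v : ℝ × ℝ × ℝ × ℝ) (f : ℝ → ℝ → ℝ → ℝ → ℝ) :
    ℝ × ℝ × ℝ × ℝ → ℝ := pd v (F4 f)

noncomputable def DDF (v w : ℝ × ℝ × ℝ × ℝ) (f : ℝ → ℝ → ℝ → ℝ → ℝ) :
    ℝ × ℝ × ℝ × ℝ → ℝ := pd v (pd w (F4 f))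

noncomputable def DU (v : ℝ × ℝ × ℝ) (u : ℝ → ℝ → ℝ → ℝ) : ℝ × ℝ × ℝ → ℝ :=
  pd v (U3 u)

noncomputable def DDU (v w : ℝ × ℝ × ℝ) (u : ℝ → ℝ → ℝ → ℝ) : ℝ × ℝ × ℝ → ℝ :=
  pd v (pd w (U3 u))

abbrev HF (f : ℝ → ℝ → ℝ → ℝ → ℝ) : Prop :=
  ContDiff ℝ (⊤ : ℕ∞) (fun p : ℝ × ℝ × ℝ × ℝ => f p.1 p.2.1 p.2.2.1 p.2.2.2)

abbrev HU (u : ℝ → ℝ → ℝ → ℝ) : Prop :=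
  ContDiff ℝ (⊤ : ℕ∞) (fun p : ℝ × ℝ × ℝ => u p.1 p.2.1 p.2.2)

section specialized
variable {f : ℝ → ℝ → ℝ → ℝ → ℝ} {u : ℝ → ℝ → ℝ → ℝ}


lemma dfx (hf : HF f) (x y t l : ℝ) :
    HasDerivAt (fun x' => f x' y t l) (DF e1 f (x, y, t, l)) x := hd4x (F4 f) hf x y t l

lemma dfy (hf : HF f) (x y t l : ℝ) :
    HasDerivAt (fun y' => f x y' t l) (DF e2 f (x, y, t, l)) y := hd4y (F4 f) hf x y t l

lemma dft (hf : HF f) (x y t l : ℝ) :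
    HasDerivAt (fun t' => f x y t' l) (DF e3 f (x, y, t, l)) t := hd4t (F4 f) hf x y t l

lemma dfl (hf : HF f) (x y t l : ℝ) :
    HasDerivAt (fun l' => f x y t l') (DF e4 f (x, y, t, l)) l := hd4l (F4 f) hf x y t l

lemma dux (hu : HU u) (x y t : ℝ) :
    HasDerivAt (fun x' => u x' y t) (DU d1 u (x, y, t)) x := hd3x (U3 u) hu x y t

lemma duy (hu : HU u) (x y t : ℝ) :
    HasDerivAt (fun y' => u x y' t) (DU d2 u (x, y, t)) y := hd3y (U3 u) hu x y t

lemma dut (hu : HU u) (x y t : ℝ) :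
    HasDerivAt (fun t' => u x y t') (DU d3 u (x, y, t)) t := hd3t (U3 u) hu x y t

lemma hdDFx (hf : HF f) (v : ℝ × ℝ × ℝ × ℝ) (x y t l : ℝ) :
    HasDerivAt (fun x' => DF v f (x', y, t, l)) (DDF e1 v f (x, y, t, l)) x :=
  hd4x (pd v (F4 f)) (pd_contDiff hf v) x y t l

lemma hdDFy (hf : HF f) (v : ℝ × ℝ × ℝ × ℝ) (x y t l : ℝ) :
    HasDerivAt (fun y' => DF v f (x, y', t, l)) (DDF e2 v f (x, y, t, l)) y :=
  hd4y (pd v (F4 f)) (pd_contDiff hf v) x y t l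

lemma hdDFt (hf : HF f) (v : ℝ × ℝ × ℝ × ℝ) (x y t l : ℝ) :
    HasDerivAt (fun t' => DF v f (x, y, t', l)) (DDF e3 v f (x, y, t, l)) t :=
  hd4t (pd v (F4 f)) (pd_contDiff hf v) x y t l

lemma hdDFl (hf : HF f) (v : ℝ × ℝ × ℝ × ℝ) (x y t l : ℝ) :
    HasDerivAt (fun l' => DF v f (x, y, t, l')) (DDF e4 v f (x, y, t, l)) l :=
  hd4l (pd v (F4 f)) (pd_contDiff hf v) x y t l

lemma hdDUx (hu : HU u) (v : ℝ × ℝ × ℝ) (x y t : ℝ) :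
    HasDerivAt (fun x' => DU v u (x', y, t)) (DDU d1 v u (x, y, t)) x :=
  hd3x (pd v (U3 u)) (pd_contDiff hu v) x y t

lemma hdDUy (hu : HU u) (v : ℝ × ℝ × ℝ) (x y t : ℝ) :
    HasDerivAt (fun y' => DU v u (x, y', t)) (DDU d2 v u (x, y, t)) y :=
  hd3y (pd v (U3 u)) (pd_contDiff hu v) x y t

lemma hdDUt (hu : HU u) (v : ℝ × ℝ × ℝ) (x y t : ℝ) :
    HasDerivAt (fun t' => DU v u (x, y, t')) (DDU d3 v u (x, y, t)) t :=
  hd3t (pd v (U3 u)) (pd_contDiff hu v) x y t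

lemma DDF_comm (hf : HF f) (v w p : ℝ × ℝ × ℝ × ℝ) : DDF v w f p = DDF w v f p :=
  pd_comm hf v w p

lemma DDU_comm (hu : HU u) (v w p : ℝ × ℝ × ℝ) : DDU v w u p = DDU w v u p :=
  pd_comm hu v w p

end specialized

/-- The first Lax operator `L₁ f = ∂_y f − λ ∂_x f + 2 (∂_x u) λ ∂_λ f`. -/
noncomputable def L1 (u : ℝ → ℝ → ℝ → ℝ) (f : ℝ → ℝ → ℝ → ℝ → ℝ) :
    ℝ → ℝ → ℝ → ℝ → ℝ := fun x y t l =>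
  deriv (fun y' => f x y' t l) y - l * deriv (fun x' => f x' y t l) x
    + 2 * (deriv (fun x' => u x' y t) x) * l * deriv (fun l' => f x y t l') l

/-- The second Lax operator
`L₂ f = ∂_t f + (λ²/2 + u λ) ∂_x f − ((∂_x u) λ + ∂_y u + 2 u ∂_x u) λ ∂_λ f`. -/
noncomputable def L2 (u : ℝ → ℝ → ℝ → ℝ) (f : ℝ → ℝ → ℝ → ℝ → ℝ) :
    ℝ → ℝ → ℝ → ℝ → ℝ := fun x y t l =>
  deriv (fun t' => f x y t' l) t
    + (l ^ 2 / 2 + u x y t * l) * deriv (fun x' => f x' y t l) x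
    - ((deriv (fun x' => u x' y t) x) * l + deriv (fun y' => u x y' t) y
        + 2 * u x y t * (deriv (fun x' => u x' y t) x)) * l
      * deriv (fun l' => f x y t l') l

lemma L1form {u : ℝ → ℝ → ℝ → ℝ} {f : ℝ → ℝ → ℝ → ℝ → ℝ} (hu : HU u) (hf : HF f)
    (a b c d : ℝ) :
    L1 u f a b c d = DF e2 f (a, b, c, d) - d * DF e1 f (a, b, c, d)
      + 2 * DU d1 u (a, b, c) * d * DF e4 f (a, b, c, d) := by
  show deriv (fun y' => f a y' c d) b - d * deriv (fun x' => f x' b c d) a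
      + 2 * deriv (fun x' => u x' b c) a * d * deriv (fun l' => f a b c l') d = _
  rw [(dfy hf a b c d).deriv, (dfx hf a b c d).deriv, (dux hu a b c).deriv,
    (dfl hf a b c d).deriv]

lemma L2form {u : ℝ → ℝ → ℝ → ℝ} {f : ℝ → ℝ → ℝ → ℝ → ℝ} (hu : HU u) (hf : HF f)
    (a b c d : ℝ) :
    L2 u f a b c d = DF e3 f (a, b, c, d)
      + (d ^ 2 / 2 + u a b c * d) * DF e1 f (a, b, c, d)
      - (DU d1 u (a, b, c) * d + DU d2 u (a, b, c)
          + 2 * u a b c * DU d1 u (a, b, c)) * d * DF e4 f (a, b, c, d) := by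
  show deriv (fun t' => f a b t' d) c
      + (d ^ 2 / 2 + u a b c * d) * deriv (fun x' => f x' b c d) a
      - (deriv (fun x' => u x' b c) a * d + deriv (fun y' => u a y' c) b
          + 2 * u a b c * deriv (fun x' => u x' b c) a) * d
        * deriv (fun l' => f a b c l') d = _
  rw [(dft hf a b c d).deriv, (dfx hf a b c d).deriv, (dux hu a b c).deriv,
    (duy hu a b c).deriv, (dfl hf a b c d).deriv]

/-- the commutator of the Lax operators is
`(L₁L₂ − L₂L₁) f = −λ ((u²)_{xy} + u_{yy} + 2u_{xt}) ∂_λ f`,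
where `(u²)_{xy} = 2 (u_x u_y + u u_{xy})`. -/
theorem commutator_of_Lax_operators
    (u : ℝ → ℝ → ℝ → ℝ)
    (hu : ContDiff ℝ (⊤ : ℕ∞) (fun p : ℝ × ℝ × ℝ => u p.1 p.2.1 p.2.2))
    (f : ℝ → ℝ → ℝ → ℝ → ℝ)
    (hf : ContDiff ℝ (⊤ : ℕ∞) (fun p : ℝ × ℝ × ℝ × ℝ => f p.1 p.2.1 p.2.2.1 p.2.2.2)) :
    ∀ x y t l : ℝ,
      L1 u (L2 u f) x y t l - L2 u (L1 u f) x y t l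
        = -l * (2 * (deriv (fun x' => u x' y t) x * deriv (fun y' => u x y' t) y
                      + u x y t * deriv (fun x' => deriv (fun y' => u x' y' t) y) x)
                + deriv (fun y' => deriv (fun y'' => u x y'' t) y') y
                + 2 * deriv (fun x' => deriv (fun t' => u x' y t') t) x)
            * deriv (fun l' => f x y t l') l := by
  intro x y t l
  have hAy : deriv (fun y' => DF e3 f (x, y', t, l)
      + (l ^ 2 / 2 + u x y' t * l) * DF e1 f (x, y', t, l)
      - (DU d1 u (x, y', t) * l + DU d2 u (x, y', t)
          + 2 * u x y' t * DU d1 u (x, y', t)) * l * DF e4 f (x, y', t, l)) y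
      = DDF e2 e3 f (x, y, t, l) + DU d2 u (x, y, t) * l * DF e1 f (x, y, t, l)
        + (l ^ 2 / 2 + u x y t * l) * DDF e2 e1 f (x, y, t, l)
        - (DDU d2 d1 u (x, y, t) * l + DDU d2 d2 u (x, y, t)
            + 2 * DU d2 u (x, y, t) * DU d1 u (x, y, t)
            + 2 * u x y t * DDU d2 d1 u (x, y, t)) * l * DF e4 f (x, y, t, l)
        - (DU d1 u (x, y, t) * l + DU d2 u (x, y, t)
            + 2 * u x y t * DU d1 u (x, y, t)) * l * DDF e2 e4 f (x, y, t, l) :=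
    (((hdDFy hf e3 x y t l).add
        (((hasDerivAt_const y (l ^ 2 / 2)).add ((duy hu x y t).mul_const l)).mul
          (hdDFy hf e1 x y t l))).sub
      ((((((hdDUy hu d1 x y t).mul_const l).add (hdDUy hu d2 x y t)).add
          (((duy hu x y t).const_mul 2).mul (hdDUy hu d1 x y t))).mul_const l).mul
        (hdDFy hf e4 x y t l))).deriv.trans (by simp only [Pi.add_apply, Pi.mul_apply]; ring)
  have hAx : deriv (fun x' => DF e3 f (x', y, t, l)
      + (l ^ 2 / 2 + u x' y t * l) * DF e1 f (x', y, t, l)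
      - (DU d1 u (x', y, t) * l + DU d2 u (x', y, t)
          + 2 * u x' y t * DU d1 u (x', y, t)) * l * DF e4 f (x', y, t, l)) x
      = DDF e1 e3 f (x, y, t, l) + DU d1 u (x, y, t) * l * DF e1 f (x, y, t, l)
        + (l ^ 2 / 2 + u x y t * l) * DDF e1 e1 f (x, y, t, l)
        - (DDU d1 d1 u (x, y, t) * l + DDU d1 d2 u (x, y, t)
            + 2 * DU d1 u (x, y, t) * DU d1 u (x, y, t)
            + 2 * u x y t * DDU d1 d1 u (x, y, t)) * l * DF e4 f (x, y, t, l)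
        - (DU d1 u (x, y, t) * l + DU d2 u (x, y, t)
            + 2 * u x y t * DU d1 u (x, y, t)) * l * DDF e1 e4 f (x, y, t, l) :=
    (((hdDFx hf e3 x y t l).add
        (((hasDerivAt_const x (l ^ 2 / 2)).add ((dux hu x y t).mul_const l)).mul
          (hdDFx hf e1 x y t l))).sub
      ((((((hdDUx hu d1 x y t).mul_const l).add (hdDUx hu d2 x y t)).add
          (((dux hu x y t).const_mul 2).mul (hdDUx hu d1 x y t))).mul_const l).mul
        (hdDFx hf e4 x y t l))).deriv.trans (by simp only [Pi.add_apply, Pi.mul_apply]; ring)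
  have hAl : deriv (fun l' => DF e3 f (x, y, t, l')
      + (l' ^ 2 / 2 + u x y t * l') * DF e1 f (x, y, t, l')
      - (DU d1 u (x, y, t) * l' + DU d2 u (x, y, t)
          + 2 * u x y t * DU d1 u (x, y, t)) * l' * DF e4 f (x, y, t, l')) l
      = DDF e4 e3 f (x, y, t, l) + (l + u x y t) * DF e1 f (x, y, t, l)
        + (l ^ 2 / 2 + u x y t * l) * DDF e4 e1 f (x, y, t, l)
        - (2 * DU d1 u (x, y, t) * l + DU d2 u (x, y, t)
            + 2 * u x y t * DU d1 u (x, y, t)) * DF e4 f (x, y, t, l)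
        - (DU d1 u (x, y, t) * l + DU d2 u (x, y, t)
            + 2 * u x y t * DU d1 u (x, y, t)) * l * DDF e4 e4 f (x, y, t, l) :=
    (((hdDFl hf e3 x y t l).add
        ((((hasDerivAt_pow 2 l).div_const 2).add
            ((hasDerivAt_id l).const_mul (u x y t))).mul (hdDFl hf e1 x y t l))).sub
      ((((((hasDerivAt_id l).const_mul (DU d1 u (x, y, t))).add
            (hasDerivAt_const l (DU d2 u (x, y, t)))).add
            (hasDerivAt_const l (2 * u x y t * DU d1 u (x, y, t)))).mul
          (hasDerivAt_id l)).mul (hdDFl hf e4 x y t l))).deriv.trans (by simp only [id_eq]; norm_num; ring)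
  have hBt : deriv (fun t' => DF e2 f (x, y, t', l) - l * DF e1 f (x, y, t', l)
      + 2 * DU d1 u (x, y, t') * l * DF e4 f (x, y, t', l)) t
      = DDF e3 e2 f (x, y, t, l) - l * DDF e3 e1 f (x, y, t, l)
        + 2 * DDU d3 d1 u (x, y, t) * l * DF e4 f (x, y, t, l)
        + 2 * DU d1 u (x, y, t) * l * DDF e3 e4 f (x, y, t, l) :=
    (((hdDFt hf e2 x y t l).sub ((hdDFt hf e1 x y t l).const_mul l)).add
      ((((hdDUt hu d1 x y t).const_mul 2).mul_const l).mul
        (hdDFt hf e4 x y t l))).deriv.trans (by ring)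
  have hBx : deriv (fun x' => DF e2 f (x', y, t, l) - l * DF e1 f (x', y, t, l)
      + 2 * DU d1 u (x', y, t) * l * DF e4 f (x', y, t, l)) x
      = DDF e1 e2 f (x, y, t, l) - l * DDF e1 e1 f (x, y, t, l)
        + 2 * DDU d1 d1 u (x, y, t) * l * DF e4 f (x, y, t, l)
        + 2 * DU d1 u (x, y, t) * l * DDF e1 e4 f (x, y, t, l) :=
    (((hdDFx hf e2 x y t l).sub ((hdDFx hf e1 x y t l).const_mul l)).add
      ((((hdDUx hu d1 x y t).const_mul 2).mul_const l).mul
        (hdDFx hf e4 x y t l))).deriv.trans (by ring)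
  have hBl : deriv (fun l' => DF e2 f (x, y, t, l') - l' * DF e1 f (x, y, t, l')
      + 2 * DU d1 u (x, y, t) * l' * DF e4 f (x, y, t, l')) l
      = DDF e4 e2 f (x, y, t, l) - DF e1 f (x, y, t, l) - l * DDF e4 e1 f (x, y, t, l)
        + 2 * DU d1 u (x, y, t) * DF e4 f (x, y, t, l)
        + 2 * DU d1 u (x, y, t) * l * DDF e4 e4 f (x, y, t, l) :=
    (((hdDFl hf e2 x y t l).sub ((hasDerivAt_id l).mul (hdDFl hf e1 x y t l))).add
      (((hasDerivAt_id l).const_mul (2 * DU d1 u (x, y, t))).mul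
        (hdDFl hf e4 x y t l))).deriv.trans (by simp only [id_eq]; ring)
  show (deriv (fun y' => L2 u f x y' t l) y - l * deriv (fun x' => L2 u f x' y t l) x
      + 2 * deriv (fun x' => u x' y t) x * l * deriv (fun l' => L2 u f x y t l') l)
    - (deriv (fun t' => L1 u f x y t' l) t
      + (l ^ 2 / 2 + u x y t * l) * deriv (fun x' => L1 u f x' y t l) x
      - (deriv (fun x' => u x' y t) x * l + deriv (fun y' => u x y' t) y
          + 2 * u x y t * deriv (fun x' => u x' y t) x) * l
        * deriv (fun l' => L1 u f x y t l') l) = _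
  rw [funext fun y' => L2form hu hf x y' t l,
      funext fun x' => L2form hu hf x' y t l,
      funext fun l' => L2form hu hf x y t l',
      funext fun t' => L1form hu hf x y t' l,
      funext fun x' => L1form hu hf x' y t l,
      funext fun l' => L1form hu hf x y t l',
      hAy, hAx, hAl, hBt, hBx, hBl,
      (dux hu x y t).deriv, (duy hu x y t).deriv, (dfl hf x y t l).deriv,
      funext fun x' => (duy hu x' y t).deriv, (hdDUx hu d2 x y t).deriv,
      funext fun y' => (duy hu x y' t).deriv, (hdDUy hu d2 x y t).deriv,
      funext fun x' => (dut hu x' y t).deriv, (hdDUx hu d3 x y t).deriv,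
      DDF_comm hf e3 e2 (x, y, t, l), DDF_comm hf e3 e1 (x, y, t, l),
      DDF_comm hf e3 e4 (x, y, t, l), DDF_comm hf e1 e2 (x, y, t, l),
      DDF_comm hf e4 e2 (x, y, t, l), DDF_comm hf e4 e1 (x, y, t, l),
      DDU_comm hu d2 d1 (x, y, t), DDU_comm hu d3 d1 (x, y, t)]
  ring
end

section
/- Let u : ℝ³ → ℝ be smooth and let f₁, f₂ : ℝ⁴ → ℝ be smooth functions of (x,y,t,λ) satisfying L₁ f₁ = 0, L₁ f₂ = 0, L₂ f₁ = 0 and L₂ f₂ = (1/2) f₁² identically on ℝ⁴. Then the functions g₁(x,y,t,λ) = f₁(x,y,t,λ) and g₂(x,y,t,λ) = f₂(x,y,t,λ) − (t/2)·(f₁(x,y,t,λ))² are common eigenfunctions of the Lax pair, i.e. L₁ g₁ = 0, L₁ g₂ = 0, L₂ g₁ = 0 and L₂ g₂ = 0 identically on ℝ⁴. -/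
/-- if `L₁f₁ = L₁f₂ = 0`, `L₂f₁ = 0` and `L₂f₂ = f₁²/2`, then
`g₁ = f₁` and `g₂ = f₂ − (t/2) f₁²` are common eigenfunctions of the Lax pair. -/
theorem common_eigenfunctions_of_Lax_pair
    (u : ℝ → ℝ → ℝ → ℝ)
    (hu : ContDiff ℝ (⊤ : ℕ∞) (fun p : ℝ × ℝ × ℝ => u p.1 p.2.1 p.2.2))
    (f₁ f₂ : ℝ → ℝ → ℝ → ℝ → ℝ)
    (hf₁ : ContDiff ℝ (⊤ : ℕ∞) (fun p : ℝ × ℝ × ℝ × ℝ => f₁ p.1 p.2.1 p.2.2.1 p.2.2.2))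
    (hf₂ : ContDiff ℝ (⊤ : ℕ∞) (fun p : ℝ × ℝ × ℝ × ℝ => f₂ p.1 p.2.1 p.2.2.1 p.2.2.2))
    (h₁ : ∀ x y t l : ℝ, L1 u f₁ x y t l = 0)
    (h₂ : ∀ x y t l : ℝ, L1 u f₂ x y t l = 0)
    (h₃ : ∀ x y t l : ℝ, L2 u f₁ x y t l = 0)
    (h₄ : ∀ x y t l : ℝ, L2 u f₂ x y t l = (1 / 2) * (f₁ x y t l) ^ 2)
    (g₁ g₂ : ℝ → ℝ → ℝ → ℝ → ℝ)
    (hg₁ : ∀ x y t l : ℝ, g₁ x y t l = f₁ x y t l)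
    (hg₂ : ∀ x y t l : ℝ, g₂ x y t l = f₂ x y t l - (t / 2) * (f₁ x y t l) ^ 2) :
    (∀ x y t l : ℝ, L1 u g₁ x y t l = 0) ∧ (∀ x y t l : ℝ, L1 u g₂ x y t l = 0) ∧
      (∀ x y t l : ℝ, L2 u g₁ x y t l = 0) ∧ (∀ x y t l : ℝ, L2 u g₂ x y t l = 0) := by
  have hg₁' : g₁ = f₁ := by funext x y t l; exact hg₁ x y t l
  have hg₂' : g₂ = fun x y t l => f₂ x y t l - t / 2 * (f₁ x y t l) ^ 2 := by
    funext x y t l; exact hg₂ x y t l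
  rw [hg₁', hg₂']
  have hf₁' := hf₁.differentiable (by simp)
  have hf₂' := hf₂.differentiable (by simp)
  have D1x : ∀ x y t l : ℝ, DifferentiableAt ℝ (fun x' => f₁ x' y t l) x := by
    intro x y t l; have := hf₁'; fun_prop
  have D1y : ∀ x y t l : ℝ, DifferentiableAt ℝ (fun y' => f₁ x y' t l) y := by
    intro x y t l; have := hf₁'; fun_prop
  have D1t : ∀ x y t l : ℝ, DifferentiableAt ℝ (fun t' => f₁ x y t' l) t := by
    intro x y t l; have := hf₁'; fun_prop
  have D1l : ∀ x y t l : ℝ, DifferentiableAt ℝ (fun l' => f₁ x y t l') l := by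
    intro x y t l; have := hf₁'; fun_prop
  have D2x : ∀ x y t l : ℝ, DifferentiableAt ℝ (fun x' => f₂ x' y t l) x := by
    intro x y t l; have := hf₂'; fun_prop
  have D2y : ∀ x y t l : ℝ, DifferentiableAt ℝ (fun y' => f₂ x y' t l) y := by
    intro x y t l; have := hf₂'; fun_prop
  have D2t : ∀ x y t l : ℝ, DifferentiableAt ℝ (fun t' => f₂ x y t' l) t := by
    intro x y t l; have := hf₂'; fun_prop
  have D2l : ∀ x y t l : ℝ, DifferentiableAt ℝ (fun l' => f₂ x y t l') l := by
    intro x y t l; have := hf₂'; fun_prop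
  have ex : ∀ x y t l : ℝ,
      deriv (fun x' => f₂ x' y t l - t / 2 * (f₁ x' y t l) ^ 2) x
        = deriv (fun x' => f₂ x' y t l) x
          - t * f₁ x y t l * deriv (fun x' => f₁ x' y t l) x := by
    intro x y t l
    have h := ((D2x x y t l).hasDerivAt.sub
      ((((D1x x y t l).hasDerivAt.pow 2)).const_mul (t / 2)))
    erw [h.deriv]; ring
  have ey : ∀ x y t l : ℝ,
      deriv (fun y' => f₂ x y' t l - t / 2 * (f₁ x y' t l) ^ 2) y
        = deriv (fun y' => f₂ x y' t l) y
          - t * f₁ x y t l * deriv (fun y' => f₁ x y' t l) y := by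
    intro x y t l
    have h := ((D2y x y t l).hasDerivAt.sub
      ((((D1y x y t l).hasDerivAt.pow 2)).const_mul (t / 2)))
    erw [h.deriv]; ring
  have el : ∀ x y t l : ℝ,
      deriv (fun l' => f₂ x y t l' - t / 2 * (f₁ x y t l') ^ 2) l
        = deriv (fun l' => f₂ x y t l') l
          - t * f₁ x y t l * deriv (fun l' => f₁ x y t l') l := by
    intro x y t l
    have h := ((D2l x y t l).hasDerivAt.sub
      ((((D1l x y t l).hasDerivAt.pow 2)).const_mul (t / 2)))
    erw [h.deriv]; ring
  have et : ∀ x y t l : ℝ,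
      deriv (fun t' => f₂ x y t' l - t' / 2 * (f₁ x y t' l) ^ 2) t
        = deriv (fun t' => f₂ x y t' l) t - (1 / 2) * (f₁ x y t l) ^ 2
          - t * f₁ x y t l * deriv (fun t' => f₁ x y t' l) t := by
    intro x y t l
    have hh : HasDerivAt (fun t' : ℝ => t' / 2) (1 / 2) t := by
      simpa using (hasDerivAt_id t).div_const 2
    have h := (D2t x y t l).hasDerivAt.sub
      (hh.mul ((D1t x y t l).hasDerivAt.pow 2))
    erw [h.deriv]; simp only [Pi.pow_apply]; ring
  refine ⟨h₁, ?_, h₃, ?_⟩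
  · intro x y t l
    have e1 := h₁ x y t l
    have e2 := h₂ x y t l
    simp only [L1] at e1 e2 ⊢
    rw [ey, ex, el]
    linear_combination e2 - t * f₁ x y t l * e1
  · intro x y t l
    have e3 := h₃ x y t l
    have e4 := h₄ x y t l
    simp only [L2] at e3 e4 ⊢
    rw [et, ex, el]
    linear_combination e4 - t * f₁ x y t l * e3
end

section
/- Let n ≥ 1 be an integer, c ∈ ℝ, and let f₂ : ℂ → ℂ satisfy f₂(conj z) = conj(f₂(z)) for all z ∈ ℂ. Define R : ℂ² → ℂ² by R₁(ζ₁,ζ₂) = ζ₁ + i f₂(c ζ₁ⁿ + ζ₂) and R₂(ζ₁,ζ₂) = ζ₂ + c ζ₁ⁿ − c (ζ₁ + i f₂(c ζ₁ⁿ + ζ₂))ⁿ. Then R satisfies the reality constraint R( conj( R( conj ζ₁, conj ζ₂ ) ) ) = (ζ₁, ζ₂) for all (ζ₁,ζ₂) ∈ ℂ², where conj acts componentwise. -/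
/-!
Writing `w = c ζ₁ⁿ + ζ₂`, the map `R` is the shift `T(a, w) = (a + i f₂(w), w)` conjugated by the
shear `(a, w) ↦ (a, w - c aⁿ)`. The shear commutes with complex conjugation because `c` is real,
and conjugating `T` by complex conjugation gives `(a, w) ↦ (a - i f₂(w), w) = T⁻¹` because `f₂` is
real; so the reality constraint passes from `T` to `R`.
-/

def SatisfiesRealityConstraint {α : Type*} [Star α] (R : α → α) : Prop :=
  ∀ x, R (star (R (star x))) = x

theorem SatisfiesRealityConstraint.equiv_conj {α β : Type*} [InvolutiveStar α] [Star β]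
    {T : α → α} (hT : SatisfiesRealityConstraint T) (e : α ≃ β)
    (he : ∀ x, e (star x) = star (e x)) : SatisfiesRealityConstraint (e.conj T) := by
  have he_symm : ∀ y, e.symm (star y) = star (e.symm y) := fun y => by
    rw [e.symm_apply_eq, he, e.apply_symm_apply]
  intro y
  simp only [Equiv.conj_apply, he_symm, ← he, e.symm_apply_apply]
  rw [hT, e.apply_symm_apply]

theorem satisfiesRealityConstraint_addShift {α β : Type*} [AddCommGroup α] [StarAddMonoid α]
    [InvolutiveStar β] {g : β → α} (hg : ∀ w, star (g (star w)) = -g w) :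
    SatisfiesRealityConstraint fun x : α × β => (x.1 + g x.2, x.2) := by
  rintro ⟨a, w⟩
  simp [hg]

theorem Equiv.prodShear_refl_subRight_star {α : Type*} [AddGroup α] [StarAddMonoid α]
    {h : α → α} (hh : ∀ a, h (star a) = star (h a)) (x : α × α) :
    Equiv.prodShear (Equiv.refl α) (fun a => Equiv.subRight (h a)) (star x) =
      star (Equiv.prodShear (Equiv.refl α) (fun a => Equiv.subRight (h a)) x) := by
  ext <;> simp [hh, star_sub]

theorem example2_reality_constraint_general
    (n : ℕ) (c : ℝ)
    (f₂ : ℂ → ℂ) (hf₂ : ∀ z : ℂ, f₂ (starRingEnd ℂ z) = starRingEnd ℂ (f₂ z))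
    (R : ℂ × ℂ → ℂ × ℂ)
    (hR : ∀ ζ : ℂ × ℂ,
      R ζ = (ζ.1 + Complex.I * f₂ ((c : ℂ) * ζ.1 ^ n + ζ.2),
             ζ.2 + (c : ℂ) * ζ.1 ^ n
               - (c : ℂ) * (ζ.1 + Complex.I * f₂ ((c : ℂ) * ζ.1 ^ n + ζ.2)) ^ n)) :
    ∀ ζ₁ ζ₂ : ℂ,
      R (starRingEnd ℂ (R (starRingEnd ℂ ζ₁, starRingEnd ℂ ζ₂)).1,
         starRingEnd ℂ (R (starRingEnd ℂ ζ₁, starRingEnd ℂ ζ₂)).2) = (ζ₁, ζ₂) := by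
  intro ζ₁ ζ₂
  let unshear := Equiv.prodShear (Equiv.refl ℂ) fun a => Equiv.subRight ((c : ℂ) * a ^ n)
  have hR_conj : R = unshear.conj fun x => (x.1 + Complex.I * f₂ x.2, x.2) := by
    funext ζ
    ext <;> simp [unshear, hR, add_comm]
  have hshift : SatisfiesRealityConstraint fun x : ℂ × ℂ => (x.1 + Complex.I * f₂ x.2, x.2) :=
    satisfiesRealityConstraint_addShift (g := fun w => Complex.I * f₂ w) fun w => by simp [hf₂]
  have hunshear := Equiv.prodShear_refl_subRight_star (h := fun a : ℂ => (c : ℂ) * a ^ n)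
    (by simp)
  exact hR_conj ▸ hshift.equiv_conj unshear hunshear (ζ₁, ζ₂)

/-- if `f₂` is a real function (`f₂(z̄) = f₂(z)̄`), `n ≥ 1` and
`c ∈ ℝ`, then the Example 2 Riemann–Hilbert data
`R(ζ₁,ζ₂) = (ζ₁ + i f₂(cζ₁ⁿ + ζ₂), ζ₂ + cζ₁ⁿ − c(ζ₁ + i f₂(cζ₁ⁿ + ζ₂))ⁿ)`
satisfies the reality constraint `R(conj(R(conj ζ))) = ζ`. -/
theorem example2_reality_constraint
    (n : ℕ) (hn : 1 ≤ n) (c : ℝ)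
    (f₂ : ℂ → ℂ) (hf₂ : ∀ z : ℂ, f₂ (starRingEnd ℂ z) = starRingEnd ℂ (f₂ z))
    (R : ℂ × ℂ → ℂ × ℂ)
    (hR : ∀ ζ : ℂ × ℂ,
      R ζ = (ζ.1 + Complex.I * f₂ ((c : ℂ) * ζ.1 ^ n + ζ.2),
             ζ.2 + (c : ℂ) * ζ.1 ^ n
               - (c : ℂ) * (ζ.1 + Complex.I * f₂ ((c : ℂ) * ζ.1 ^ n + ζ.2)) ^ n)) :
    ∀ ζ₁ ζ₂ : ℂ,
      R (starRingEnd ℂ (R (starRingEnd ℂ ζ₁, starRingEnd ℂ ζ₂)).1,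
         starRingEnd ℂ (R (starRingEnd ℂ ζ₁, starRingEnd ℂ ζ₂)).2) = (ζ₁, ζ₂) :=
  example2_reality_constraint_general n c f₂ hf₂ R hR
end
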